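/- arXiv:0810.1261 — 3 statements merged into one kernel-verified Lean document; each statement's English description precedes it below -/
import Mathlib

section
/- Let n_{i,j} ≥ 0 (1 ≤ i,j ≤ v) be real counts satisfying Σ_{j=1}^v n_{i,j} = Σ_{j=1}^v n_{j,i} = n_i > 0 for every i (as holds for circularly written texts). Define w_{i,j} = (n_{i,j} + n_{j,i})/2 and d_i = n_i. Then among all row-stochastic v×v matrices P, the circular likelihood ∏_{i,j=1}^v p_{i,j}^{n_{i,j}+n_{j,i}} is maximized by P = D⁻¹W, i.e. by p_{i,j} = (n_{i,j}+n_{j,i})/(2 n_i), where D is the diagonal matrix with diagonal entries d_i. -/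
open Matrix BigOperators Finset

/-! The circular likelihood factors over the rows `i`, and row `i` is `∏ j, p i j ^ m j` with
weights `m j = n i j + n j i` summing to `2 n i` by the balance condition. Gibbs' inequality
says such a product over a probability vector `p` is maximised by `p j = m j / ∑ m`: writing
`p j = z j * (m j / ∑ m)`, weighted AM-GM bounds `∏ z j ^ m j` by `1` because
`∑ m j * z j = (∑ m) * ∑ p j`. -/

namespace Real

variable {ι : Type*} [Fintype ι]

lemma prod_rpow_le_one_of_sum_mul_le_sum {m z : ι → ℝ} (hm : ∀ j, 0 ≤ m j)
    (hM : 0 < ∑ j, m j) (hz : ∀ j, 0 ≤ z j) (hmz : ∑ j, m j * z j ≤ ∑ j, m j) :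
    ∏ j, z j ^ m j ≤ 1 := by
  have hamgm := geom_mean_le_arith_mean univ m z (fun j _ => hm j) hM (fun j _ => hz j)
  have hmean : (∑ j, m j * z j) / ∑ j, m j ≤ 1 := (div_le_one hM).2 hmz
  have hG : 0 ≤ ∏ j, z j ^ m j := prod_nonneg fun j _ => rpow_nonneg (hz j) _
  simpa using (rpow_inv_le_iff_of_pos hG zero_le_one hM).1 (hamgm.trans hmean)

theorem prod_rpow_le_prod_div_sum_rpow {m p : ι → ℝ} (hm : ∀ j, 0 ≤ m j)
    (hM : 0 < ∑ j, m j) (hp : ∀ j, 0 ≤ p j) (hp_sum : ∑ j, p j = 1) :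
    ∏ j, p j ^ m j ≤ ∏ j, (m j / ∑ k, m k) ^ m j := by
  set M := ∑ k, m k
  -- where `m j = 0` both `z j` and `m j / M` are junk, but they only enter raised to `m j = 0`
  set z : ι → ℝ := fun j => p j * M / m j
  have hz : ∀ j, 0 ≤ z j := fun j => div_nonneg (mul_nonneg (hp j) hM.le) (hm j)
  have hmz : ∑ j, m j * z j ≤ M := by
    calc ∑ j, m j * z j ≤ ∑ j, p j * M := sum_le_sum fun j _ => by
            rcases (hm j).eq_or_lt with h | h
            · simp [z, ← h, mul_nonneg (hp j) hM.le]
            · exact (mul_div_cancel₀ _ h.ne').le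
      _ = M := by rw [← sum_mul, hp_sum, one_mul]
  have hfactor : ∏ j, p j ^ m j = (∏ j, z j ^ m j) * ∏ j, (m j / M) ^ m j := by
    rw [← prod_mul_distrib]
    refine prod_congr rfl fun j _ => ?_
    rcases (hm j).eq_or_lt with h | h
    · simp [← h]
    · rw [← mul_rpow (hz j) (div_nonneg (hm j) hM.le)]
      simp only [z]
      field_simp
  rw [hfactor]
  exact mul_le_of_le_one_left (prod_nonneg fun j _ => rpow_nonneg (div_nonneg (hm j) hM.le) _)
    (prod_rpow_le_one_of_sum_mul_le_sum hm hM hz hmz)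

end Real

lemma sum_add_transpose_row_of_balanced {ι : Type*} [Fintype ι] {N : Matrix ι ι ℝ}
    (hbal : ∀ i, ∑ j, N i j = ∑ j, N j i) (i : ι) :
    ∑ j, (N i j + N j i) = 2 * ∑ k, N i k := by
  rw [sum_add_distrib, ← hbal i, two_mul]

/-- Lemma 2: with the circular writing model, the maximum likelihood
row-stochastic transition matrix is `P = D⁻¹ W`, i.e.
`p i j = (n i j + n j i) / (2 * n i)`: it is row-stochastic, and every
row-stochastic matrix `P` has circular likelihood at most that of this
matrix (real powers, with the convention `0 ^ 0 = 1`). -/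
theorem max_likelihood_circular_transition_matrix
    (v : ℕ) (N : Matrix (Fin v) (Fin v) ℝ)
    (hN : ∀ i j, 0 ≤ N i j)
    (hbal : ∀ i, ∑ j, N i j = ∑ j, N j i)
    (hpos : ∀ i, 0 < ∑ j, N i j)
    (P : Matrix (Fin v) (Fin v) ℝ)
    (hPnn : ∀ i j, 0 ≤ P i j)
    (hProw : ∀ i, ∑ j, P i j = 1) :
    (∀ i j, 0 ≤ (N i j + N j i) / (2 * ∑ k, N i k)) ∧
    (∀ i, ∑ j, (N i j + N j i) / (2 * ∑ k, N i k) = 1) ∧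
    (∏ i, ∏ j, (P i j) ^ (N i j + N j i)) ≤
      ∏ i, ∏ j, ((N i j + N j i) / (2 * ∑ k, N i k)) ^ (N i j + N j i) := by
  have hrow := sum_add_transpose_row_of_balanced hbal
  have hweight : ∀ i j, 0 ≤ N i j + N j i := fun i j => add_nonneg (hN i j) (hN j i)
  have hrow_pos : ∀ i, 0 < ∑ j, (N i j + N j i) := fun i => by
    rw [hrow]; exact mul_pos two_pos (hpos i)
  refine ⟨fun i j => div_nonneg (hweight i j) (mul_pos two_pos (hpos i)).le,
    fun i => ?_, ?_⟩
  · rw [← sum_div, hrow, div_self (mul_pos two_pos (hpos i)).ne']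
  · refine prod_le_prod (fun i _ => prod_nonneg fun j _ => Real.rpow_nonneg (hPnn i j) _)
      fun i _ => ?_
    simpa only [hrow] using
      Real.prod_rpow_le_prod_div_sum_rpow (hweight i) (hrow_pos i) (hPnn i) (hProw i)
end

section
/- Let W be a v×v symmetric real matrix with nonnegative entries, D the diagonal matrix with diagonal entries d_i = Σ_{j=1}^v w_{i,j} > 0, P = D⁻¹W, and Y ∈ ℝ^{v×q} with columns y_k satisfying (D − W)y_k = λ_k D y_k and YᵀDY = I. For each k define the soft escape quantity e_k = (1/2) Σ_{i,j=1}^v ( d_i y²_{i,k} p_{i,j} − y_{i,k} w_{i,j} y_{j,k} ). Then e_k = λ_k/2 for every k, and hence ν(Y) = Σ_{k=1}^q κ_k(Y) = 4 Σ_{k=1}^q e_k, where κ_k(Y) = Σ_{i,j=1}^v w_{i,j}(y_{i,k} − y_{j,k})². -/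
open Matrix BigOperators Finset

/-! The division in `p i j = w i j / d i` cancels against the factor `d i`, so `2 e_k` is the
Laplacian quadratic form `y_kᵀ (D - W) y_k`; by the eigen-equation and `D`-normalisation this is
`λ_k`. For symmetric `W` the same quadratic form is half of `κ_k`, so `κ_k = 2 λ_k = 4 e_k`. -/

section

variable {ι : Type*} [Fintype ι]

noncomputable def softEscape {K : Type*} [Field K] (W : Matrix ι ι K) (y : ι → K) : K :=
  (1 / 2) * ∑ i, ∑ j, ((∑ l, W i l) * y i ^ 2 * (W i j / ∑ l, W i l) - y i * W i j * y j)

variable {R : Type*} [CommRing R] [DecidableEq ι]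

theorem dotProduct_laplacian_mulVec (W : Matrix ι ι R) (y : ι → R) :
    y ⬝ᵥ ((diagonal (fun i => ∑ j, W i j) - W) *ᵥ y)
      = ∑ i, ∑ j, (W i j * y i ^ 2 - y i * W i j * y j) := by
  rw [sub_mulVec, dotProduct_sub, dotProduct, dotProduct, ← sum_sub_distrib]
  refine sum_congr rfl fun i _ => ?_
  rw [mulVec_diagonal, mulVec, dotProduct, sum_mul, mul_sum, mul_sum, ← sum_sub_distrib]
  exact sum_congr rfl fun j _ => by ring

theorem softEscape_eq_half_dotProduct_laplacian_mulVec {K : Type*} [Field K] (W : Matrix ι ι K)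
    (hd : ∀ i, ∑ j, W i j ≠ 0) (y : ι → K) :
    softEscape W y = y ⬝ᵥ ((diagonal (fun i => ∑ j, W i j) - W) *ᵥ y) / 2 := by
  have hcancel : ∀ i j, (∑ l, W i l) * y i ^ 2 * (W i j / ∑ l, W i l) = W i j * y i ^ 2 :=
    fun i j => by field_simp [hd i]
  simp only [softEscape, hcancel, dotProduct_laplacian_mulVec]
  ring

theorem sum_mul_sub_sq_eq_two_mul_dotProduct_laplacian_mulVec (W : Matrix ι ι R)
    (hsym : ∀ i j, W i j = W j i) (y : ι → R) :
    ∑ i, ∑ j, W i j * (y i - y j) ^ 2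
      = 2 * (y ⬝ᵥ ((diagonal (fun i => ∑ j, W i j) - W) *ᵥ y)) := by
  have hswap : ∑ i, ∑ j, W i j * y j ^ 2 = ∑ i, ∑ j, W i j * y i ^ 2 := by
    rw [sum_comm]; simp only [hsym]
  have hexpand : ∑ i, ∑ j, W i j * (y i - y j) ^ 2
      = ∑ i, ∑ j, (W i j * y i ^ 2 - y i * W i j * y j)
        + ∑ i, ∑ j, (W i j * y j ^ 2 - y i * W i j * y j) := by
    simp only [← sum_add_distrib]
    exact sum_congr rfl fun i _ => sum_congr rfl fun j _ => by ring
  simp only [hexpand, dotProduct_laplacian_mulVec, sum_sub_distrib, hswap]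
  ring

end

theorem dotProduct_mulVec_eq_of_mulVec_eq_smul {ι R : Type*} [Fintype ι] [CommSemiring R]
    {A B : Matrix ι ι R} {y : ι → R} {c : R}
    (hAB : A *ᵥ y = c • B *ᵥ y) (hB : y ⬝ᵥ B *ᵥ y = 1) : y ⬝ᵥ A *ᵥ y = c := by
  rw [hAB, dotProduct_smul, hB, smul_eq_mul, mul_one]

theorem transpose_mul_mul_apply_self {m n R : Type*} [Fintype m] [NonUnitalSemiring R]
    (Y : Matrix m n R) (B : Matrix m m R) (k : n) :
    (Yᵀ * B * Y) k k = (fun i => Y i k) ⬝ᵥ B *ᵥ (fun i => Y i k) := by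
  rw [Matrix.mul_assoc]
  simp [mul_apply, dotProduct, mulVec]

theorem soft_escape_probabilities_general
    (v q : ℕ) (W : Matrix (Fin v) (Fin v) ℝ)
    (hsym : ∀ i j, W i j = W j i)
    (hd : ∀ i, 0 < ∑ j, W i j)
    (Y : Matrix (Fin v) (Fin q) ℝ) (lam : Fin q → ℝ)
    (heig : ∀ k, (Matrix.diagonal (fun i => ∑ j, W i j) - W) *ᵥ (fun i => Y i k)
          = lam k • ((Matrix.diagonal (fun i => ∑ j, W i j)) *ᵥ (fun i => Y i k)))
    (hortho : Yᵀ * (Matrix.diagonal (fun i => ∑ j, W i j)) * Y = 1) :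
    (∀ k, (1 / 2) * ∑ i, ∑ j,
        ((∑ l, W i l) * (Y i k) ^ 2 * (W i j / ∑ l, W i l) - Y i k * W i j * Y j k)
      = lam k / 2) ∧
    (∑ k, ∑ i, ∑ j, W i j * (Y i k - Y j k) ^ 2
      = 4 * ∑ k, (1 / 2) * ∑ i, ∑ j,
          ((∑ l, W i l) * (Y i k) ^ 2 * (W i j / ∑ l, W i l) - Y i k * W i j * Y j k)) := by
  have hquad : ∀ k, (fun i => Y i k) ⬝ᵥ
      ((diagonal (fun i => ∑ j, W i j) - W) *ᵥ fun i => Y i k) = lam k := fun k =>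
    dotProduct_mulVec_eq_of_mulVec_eq_smul (heig k)
      (by rw [← transpose_mul_mul_apply_self, hortho, one_apply_eq])
  have hescape : ∀ k, softEscape W (fun i => Y i k) = lam k / 2 := fun k => by
    rw [softEscape_eq_half_dotProduct_laplacian_mulVec W (fun i => (hd i).ne'), hquad]
  refine ⟨hescape, ?_⟩
  calc ∑ k, ∑ i, ∑ j, W i j * (Y i k - Y j k) ^ 2 = ∑ k, 2 * lam k := by
        simp only [sum_mul_sub_sq_eq_two_mul_dotProduct_laplacian_mulVec W hsym, hquad]
    _ = 4 * ∑ k, softEscape W (fun i => Y i k) := by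
        simp only [hescape, mul_sum]
        exact sum_congr rfl fun k _ => by ring

/-- Main Theorem (algebraic form): for `P = D⁻¹ W` and `D`-orthonormal
generalized eigenvectors `y_k` with eigenvalues `λ_k`, the soft escape
quantities `e_k = (1/2) ∑ i j, (d i * y i k ^ 2 * p i j - y i k * w i j * y j k)`
satisfy `e_k = λ_k / 2`, hence `ν(Y) = ∑ k, κ_k(Y) = 4 ∑ k, e_k`. -/
theorem soft_escape_probabilities
    (v q : ℕ) (W : Matrix (Fin v) (Fin v) ℝ)
    (hsym : ∀ i j, W i j = W j i)
    (hnn : ∀ i j, 0 ≤ W i j)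
    (hd : ∀ i, 0 < ∑ j, W i j)
    (Y : Matrix (Fin v) (Fin q) ℝ) (lam : Fin q → ℝ)
    (heig : ∀ k, (Matrix.diagonal (fun i => ∑ j, W i j) - W) *ᵥ (fun i => Y i k)
          = lam k • ((Matrix.diagonal (fun i => ∑ j, W i j)) *ᵥ (fun i => Y i k)))
    (hortho : Yᵀ * (Matrix.diagonal (fun i => ∑ j, W i j)) * Y = 1) :
    (∀ k, (1 / 2) * ∑ i, ∑ j,
        ((∑ l, W i l) * (Y i k) ^ 2 * (W i j / ∑ l, W i l) - Y i k * W i j * Y j k)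
      = lam k / 2) ∧
    (∑ k, ∑ i, ∑ j, W i j * (Y i k - Y j k) ^ 2
      = 4 * ∑ k, (1 / 2) * ∑ i, ∑ j,
          ((∑ l, W i l) * (Y i k) ^ 2 * (W i j / ∑ l, W i l) - Y i k * W i j * Y j k)) :=
  soft_escape_probabilities_general v q W hsym hd Y lam heig hortho
end

section
/- Let W be a v×v symmetric real matrix, D the diagonal matrix with diagonal entries d_i = Σ_{j=1}^v w_{i,j} > 0, V_1, …, V_q a partition of {1, …, v} into nonempty sets with indicator matrix Z ∈ {0,1}^{v×q}, and Ẑ ∈ ℝ^{v×q} the matrix with columns ẑ_k = z_k / √(α_k(Z)), where α_k(Z) = Σ_{i∈V_k} d_i. Then ẐᵀDẐ = I (the q×q identity matrix) and ν(Ẑ) = Σ_{k=1}^q κ_k(Ẑ) = μ(Z) = Σ_{k=1}^q κ_k(Z)/α_k(Z), where κ_k(Y) = Σ_{i,j=1}^v w_{i,j}(y_{i,k} − y_{j,k})². -/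
/-!
Scaling a vector by `c` scales the quadratic form `∑ i j, w i j (x i - x j)²` by `c²`, so
dividing the `k`-th indicator column by `√α_k` divides `κ_k` by `α_k`. Orthonormality in the
`D`-inner product holds because distinct clusters are disjoint (so off-diagonal entries vanish)
and the `D`-norm of the `k`-th indicator column is exactly `α_k`.
-/

open Matrix BigOperators Finset Real

section NormalizedIndicator

open Function

variable {ι κ : Type*} [Fintype ι]

/-- The paper's `κ_k(Y)` is `cutForm W (Y · k)`. -/
def cutForm (W : Matrix ι ι ℝ) (x : ι → ℝ) : ℝ :=
  ∑ i, ∑ j, W i j * (x i - x j) ^ 2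

lemma cutForm_div (W : Matrix ι ι ℝ) (x : ι → ℝ) (c : ℝ) :
    cutForm W (fun i => x i / c) = cutForm W x / c ^ 2 := by
  simp only [cutForm, sum_div]
  refine sum_congr rfl fun i _ => sum_congr rfl fun j _ => ?_
  rw [div_sub_div_same, div_pow, mul_div_assoc]

variable [DecidableEq ι]

noncomputable def normalizedIndicator (d : ι → ℝ) (S : κ → Finset ι) : Matrix ι κ ℝ :=
  fun i k => (if i ∈ S k then (1 : ℝ) else 0) / √(∑ i' ∈ S k, d i')

lemma transpose_mul_diagonal_mul_apply {μ : Type*} (Y : Matrix ι μ ℝ) (d : ι → ℝ) (k l : μ) :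
    (Yᵀ * diagonal d * Y) k l = ∑ i, Y i k * d i * Y i l := by
  rw [mul_apply]
  simp only [mul_diagonal, transpose_apply]

lemma normalizedIndicator_transpose_mul_diagonal_mul_apply (d : ι → ℝ) (S : κ → Finset ι)
    (k l : κ) :
    ((normalizedIndicator d S)ᵀ * diagonal d * normalizedIndicator d S) k l
      = (∑ i ∈ S k ∩ S l, d i) / (√(∑ i ∈ S k, d i) * √(∑ i ∈ S l, d i)) := by
  rw [transpose_mul_diagonal_mul_apply, ← univ_inter (S k ∩ S l), ← sum_ite_mem, sum_div]
  refine sum_congr rfl fun i _ => ?_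
  simp only [normalizedIndicator, mem_inter]
  split_ifs <;> field_simp <;> simp_all

lemma normalizedIndicator_transpose_mul_diagonal_mul [DecidableEq κ]
    (d : ι → ℝ) (S : κ → Finset ι) (hα : ∀ k, 0 < ∑ i ∈ S k, d i)
    (hdisj : Pairwise (Disjoint on S)) :
    (normalizedIndicator d S)ᵀ * diagonal d * normalizedIndicator d S = 1 := by
  ext k l
  rw [normalizedIndicator_transpose_mul_diagonal_mul_apply]
  rcases eq_or_ne k l with rfl | hkl
  · rw [inter_self, mul_self_sqrt (hα k).le, div_self (hα k).ne', one_apply_eq]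
  · rw [disjoint_iff_inter_eq_empty.1 (hdisj hkl), sum_empty, zero_div, one_apply_ne hkl]

end NormalizedIndicator

theorem normalized_indicator_matrix_general
    (v q : ℕ) (W : Matrix (Fin v) (Fin v) ℝ)
    (hd : ∀ i, 0 < ∑ j, W i j)
    (V : Fin q → Finset (Fin v))
    (hne : ∀ k, (V k).Nonempty)
    (hpart : ∀ i, ∃! k, i ∈ V k)
    (Zhat : Matrix (Fin v) (Fin q) ℝ)
    (hZhat : ∀ i k, Zhat i k
        = (if i ∈ V k then (1 : ℝ) else 0) / Real.sqrt (∑ i' ∈ V k, ∑ l, W i' l)) :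
    Zhatᵀ * (Matrix.diagonal (fun i => ∑ j, W i j)) * Zhat = 1 ∧
    ∑ k, ∑ i, ∑ j, W i j * (Zhat i k - Zhat j k) ^ 2
      = ∑ k, (∑ i, ∑ j, W i j *
            ((if i ∈ V k then (1 : ℝ) else 0) - (if j ∈ V k then (1 : ℝ) else 0)) ^ 2)
          / (∑ i' ∈ V k, ∑ l, W i' l) := by
  have hα : ∀ k, 0 < ∑ i' ∈ V k, ∑ l, W i' l := fun k => sum_pos (fun i _ => hd i) (hne k)
  have hZ : Zhat = normalizedIndicator (fun i => ∑ l, W i l) V := by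
    ext i k
    exact hZhat i k
  refine ⟨hZ ▸ normalizedIndicator_transpose_mul_diagonal_mul _ V hα
    fun k l hkl => disjoint_left.2 fun i hk hl => hkl ((hpart i).unique hk hl),
    sum_congr rfl fun k _ => ?_⟩
  have := cutForm_div W (fun i => if i ∈ V k then (1 : ℝ) else 0) √(∑ i' ∈ V k, ∑ l, W i' l)
  rw [sq_sqrt (hα k).le] at this
  simpa only [cutForm, hZhat] using this

/-- The `D`-normalized indicator matrix `Ẑ`, with columns
`ẑ_k = z_k / √(α_k(Z))` where `α_k(Z) = ∑_{i ∈ V_k} d i`, satisfies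
`Ẑᵀ D Ẑ = I` and `ν(Ẑ) = μ(Z)`: the relaxed objective evaluated at `Ẑ`
coincides with the multiway normalized cuts objective of the partition. -/
theorem normalized_indicator_matrix
    (v q : ℕ) (W : Matrix (Fin v) (Fin v) ℝ)
    (hsym : ∀ i j, W i j = W j i)
    (hd : ∀ i, 0 < ∑ j, W i j)
    (V : Fin q → Finset (Fin v))
    (hne : ∀ k, (V k).Nonempty)
    (hpart : ∀ i, ∃! k, i ∈ V k)
    (Zhat : Matrix (Fin v) (Fin q) ℝ)
    (hZhat : ∀ i k, Zhat i k
        = (if i ∈ V k then (1 : ℝ) else 0) / Real.sqrt (∑ i' ∈ V k, ∑ l, W i' l)) :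
    Zhatᵀ * (Matrix.diagonal (fun i => ∑ j, W i j)) * Zhat = 1 ∧
    ∑ k, ∑ i, ∑ j, W i j * (Zhat i k - Zhat j k) ^ 2
      = ∑ k, (∑ i, ∑ j, W i j *
            ((if i ∈ V k then (1 : ℝ) else 0) - (if j ∈ V k then (1 : ℝ) else 0)) ^ 2)
          / (∑ i' ∈ V k, ∑ l, W i' l) :=
  normalized_indicator_matrix_general v q W hd V hne hpart Zhat hZhat
end
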